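/- arXiv:2405.19977 — 8 statements merged into one kernel-verified Lean document; each statement's English description precedes it below -/
import Mathlib

section
/- Let f be a monotone submodular function, B ⊆ V a finite set, and O ⊆ V a set with |O| ≤ k. Suppose for every element e ∈ O \ B we have f(e | B) ≤ (β/k)·f(B) for some β ≥ 0. Then f(O) ≤ (1 + β)·f(B). -/
lemma stmt_2_aux {α : Type*} [DecidableEq α] (f : Finset α → ℝ)
    (hmono : ∀ X Y : Finset α, X ⊆ Y → f X ≤ f Y)
    (hsub : ∀ X Y : Finset α, X ⊆ Y → ∀ e, e ∉ Y →
      f (insert e Y) - f Y ≤ f (insert e X) - f X)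
    (B : Finset α) :
    ∀ S : Finset α, f (B ∪ S) ≤ f B + ∑ e ∈ S \ B, (f (insert e B) - f B) := by
  intro S
  induction S using Finset.induction_on with
  | empty => simp
  | @insert a S ha ih =>
    by_cases hab : a ∈ B ∪ S
    · have : B ∪ insert a S = B ∪ S := by
        ext x; simp only [Finset.mem_union, Finset.mem_insert]
        constructor
        · rintro (h | rfl | h)
          · exact Or.inl h
          · simpa using hab
          · exact Or.inr h
        · rintro (h | h); exacts [Or.inl h, Or.inr (Or.inr h)]
      rw [this]
      refine ih.trans (add_le_add_right (Finset.sum_le_sum_of_subset_of_nonneg ?_ ?_) _)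
      · exact Finset.sdiff_subset_sdiff (Finset.subset_insert _ _) le_rfl
      · intro e he hne
        have heB : e ∉ B := (Finset.mem_sdiff.mp he).2
        have := hmono B (insert e B) (Finset.subset_insert _ _)
        linarith
    · have hBa : a ∉ B := fun h => hab (Finset.mem_union_left _ h)
      have hstep : f (B ∪ insert a S) - f (B ∪ S) ≤ f (insert a B) - f B := by
        have : B ∪ insert a S = insert a (B ∪ S) := Finset.union_insert _ _ _
        rw [this]
        exact hsub B (B ∪ S) Finset.subset_union_left a hab
      have hsd : (insert a S) \ B = insert a (S \ B) := by
        rw [Finset.insert_sdiff_of_notMem _ hBa]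
      rw [hsd, Finset.sum_insert (by simp [ha, Finset.mem_sdiff])]
      linarith

/-- Lemma 4.1: OPT vs benchmark set. -/
theorem stmt_2 {α : Type*} [DecidableEq α] (f : Finset α → ℝ)
    (hnn : ∀ S : Finset α, 0 ≤ f S)
    (hmono : ∀ X Y : Finset α, X ⊆ Y → f X ≤ f Y)
    (hsub : ∀ X Y : Finset α, X ⊆ Y → ∀ e, e ∉ Y →
      f (insert e Y) - f Y ≤ f (insert e X) - f X)
    (k : ℕ) (hk : 1 ≤ k) (β : ℝ) (hβ : 0 ≤ β)
    (B O : Finset α) (hO : O.card ≤ k)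
    (hmarg : ∀ e ∈ O \ B, f (insert e B) - f B ≤ β / k * f B) :
    f O ≤ (1 + β) * f B := by
  have h1 : f O ≤ f (B ∪ O) := hmono _ _ Finset.subset_union_right
  have h2 := stmt_2_aux f hmono hsub B O
  have h3 : ∑ e ∈ O \ B, (f (insert e B) - f B) ≤ (O \ B).card * (β / k * f B) := by
    calc ∑ e ∈ O \ B, (f (insert e B) - f B) ≤ ∑ _e ∈ O \ B, (β / k * f B) :=
          Finset.sum_le_sum hmarg
      _ = (O \ B).card * (β / k * f B) := by rw [Finset.sum_const, nsmul_eq_mul]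
  have hcard : ((O \ B).card : ℝ) ≤ (k : ℝ) := by
    exact_mod_cast le_trans (Finset.card_le_card (Finset.sdiff_subset)) hO
  have hk0 : (0 : ℝ) < k := by exact_mod_cast hk
  have h4 : ((O \ B).card : ℝ) * (β / k * f B) ≤ (k : ℝ) * (β / k * f B) := by
    apply mul_le_mul_of_nonneg_right hcard
    have := hnn B
    positivity
  have h5 : (k : ℝ) * (β / k * f B) = β * f B := by
    field_simp
  linarith
end

section
/- Let f be a monotone submodular function, let B be a finite set, and let s_1, …, s_ℓ be distinct elements of B (with ℓ ≤ k) such that for each i, f(s_i | B \ {s_i, s_{i+1}, …, s_ℓ}) ≥ (β/k)·f(B \ {s_i, …, s_ℓ}), for some β ≥ 0. Then f(B) ≥ (1 + β/k)^ℓ · f(B \ {s_1, …, s_ℓ}), and in particular f(B) ≥ (1 + β/k)^ℓ · f(B \ S) where S = {s_1,…,s_ℓ}. -/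
/-- Lemma 4.2: multiplicative growth of the benchmark set. -/
theorem stmt_3 {α : Type*} [DecidableEq α] (f : Finset α → ℝ)
    (hnn : ∀ S : Finset α, 0 ≤ f S)
    (hmono : ∀ X Y : Finset α, X ⊆ Y → f X ≤ f Y)
    (hnorm : f ∅ = 0)
    (hsub : ∀ X Y : Finset α, X ⊆ Y → ∀ e, e ∉ Y →
      f (insert e Y) - f Y ≤ f (insert e X) - f X)
    (k : ℕ) (hk : 1 ≤ k) (β : ℝ) (hβ : 0 ≤ β)
    (B : Finset α) (ℓ : ℕ) (hℓ : ℓ ≤ k)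
    (s : ℕ → α) (hinj : Set.InjOn s (Set.Iio ℓ))
    (hmem : ∀ i < ℓ, s i ∈ B)
    (hthresh : ∀ i < ℓ,
      f (insert (s i) (B \ (Finset.Ico i ℓ).image s)) - f (B \ (Finset.Ico i ℓ).image s)
        ≥ β / k * f (B \ (Finset.Ico i ℓ).image s)) :
    f B ≥ (1 + β / k) ^ ℓ * f (B \ (Finset.range ℓ).image s) := by
  set g : ℕ → ℝ := fun i => f (B \ (Finset.Ico i ℓ).image s) with hg
  have hkey : ∀ i < ℓ, insert (s i) (B \ (Finset.Ico i ℓ).image s)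
      = B \ (Finset.Ico (i+1) ℓ).image s := by
    intro i hi
    have hIco : Finset.Ico i ℓ = insert i (Finset.Ico (i+1) ℓ) := by
      ext x; simp [Finset.mem_Ico]; omega
    have hsi : s i ∉ (Finset.Ico (i+1) ℓ).image s := by
      simp only [Finset.mem_image, Finset.mem_Ico, not_exists]
      rintro j ⟨⟨hj1, hj2⟩, hje⟩
      have := hinj (by simpa using hj2) (by simpa using hi) hje
      omega
    have hmemB : s i ∈ B \ (Finset.Ico (i+1) ℓ).image s :=
      Finset.mem_sdiff.mpr ⟨hmem i hi, hsi⟩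
    rw [hIco, Finset.image_insert, Finset.sdiff_insert,
      Finset.insert_erase hmemB]
  have hstep : ∀ i < ℓ, (1 + β / k) * g i ≤ g (i + 1) := by
    intro i hi
    have := hthresh i hi
    rw [hkey i hi] at this
    simp only [hg]
    nlinarith [hnn (B \ (Finset.Ico i ℓ).image s)]
  have hpow : ∀ j ≤ ℓ, (1 + β / k) ^ j * g 0 ≤ g j := by
    intro j
    induction j with
    | zero => simp
    | succ n ih =>
      intro hn
      have h1 : (1 + β / k) ^ n * g 0 ≤ g n := ih (by omega)
      have h2 := hstep n (by omega)
      have hc : (0:ℝ) ≤ 1 + β / k := by positivity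
      calc (1 + β / k) ^ (n+1) * g 0 = (1 + β / k) * ((1 + β / k) ^ n * g 0) := by ring
        _ ≤ (1 + β / k) * g n := by nlinarith
        _ ≤ g (n + 1) := h2
  have hℓ' := hpow ℓ le_rfl
  have h0 : g ℓ = f B := by simp [hg]
  have hrange : g 0 = f (B \ (Finset.range ℓ).image s) := by
    simp only [hg, Finset.range_eq_Ico]
  rw [h0, hrange] at hℓ'
  linarith
end

section
/- Fix reals β ≥ 1 and k ≥ 1. Suppose f is monotone, normalized and submodular, O, B are finite sets with |O| ≤ k, f(e | B) ≤ (β/k)·f(B) for all e ∈ O \ B, and S ⊆ B with f(B) ≥ (1 + β/k)^k · f(B \ S). Then f(S) ≥ [((1+β/k)^k − 1)/((1+β/k)^k (1+β))] · f(O). -/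
private lemma aux_sum8 {α : Type*} [DecidableEq α] (f : Finset α → ℝ)
    (hsub : ∀ X Y : Finset α, X ⊆ Y → ∀ e, e ∉ Y →
      f (insert e Y) - f Y ≤ f (insert e X) - f X)
    (B : Finset α) :
    ∀ T : Finset α, f (B ∪ T) ≤ f B + ∑ e ∈ T, (f (insert e B) - f B) := by
  intro T
  induction T using Finset.induction_on with
  | empty => simp
  | @insert e T he ih =>
    rw [Finset.sum_insert he]
    by_cases hB : e ∈ B
    · have h1 : B ∪ insert e T = B ∪ T := by
        ext x; simp only [Finset.mem_union, Finset.mem_insert]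
        constructor
        · rintro (h | rfl | h) <;> simp_all
        · rintro (h | h) <;> simp_all
      have h2 : insert e B = B := Finset.insert_eq_self.mpr hB
      rw [h1, h2]
      linarith
    · have hnot : e ∉ B ∪ T := by simp [hB, he]
      have h1 := hsub B (B ∪ T) Finset.subset_union_left e hnot
      rw [Finset.union_insert]
      linarith

private lemma aux_subadd8 {α : Type*} [DecidableEq α] (f : Finset α → ℝ)
    (hmono : ∀ X Y : Finset α, X ⊆ Y → f X ≤ f Y)
    (hnorm : f ∅ = 0)
    (hsub : ∀ X Y : Finset α, X ⊆ Y → ∀ e, e ∉ Y →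
      f (insert e Y) - f Y ≤ f (insert e X) - f X)
    (Y : Finset α) : ∀ X : Finset α, f (X ∪ Y) ≤ f X + f Y := by
  induction Y using Finset.induction_on with
  | empty => intro X; simp [hnorm]
  | @insert e Y he ih =>
    intro X
    by_cases hX : e ∈ X
    · have h1 : X ∪ insert e Y = X ∪ Y := by
        ext x; simp only [Finset.mem_union, Finset.mem_insert]
        constructor
        · rintro (h | rfl | h) <;> simp_all
        · rintro (h | h) <;> simp_all
      rw [h1]
      have h2 : f Y ≤ f (insert e Y) := hmono _ _ (Finset.subset_insert _ _)
      linarith [ih X]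
    · have hnot : e ∉ X ∪ Y := by simp [hX, he]
      have h1 := hsub Y (X ∪ Y) Finset.subset_union_right e hnot
      have h2 : X ∪ insert e Y = insert e (X ∪ Y) := by
        rw [Finset.union_insert]
      rw [h2]
      linarith [ih X]

/-- the combined approximation inequality of Theorem 4.3. -/
theorem stmt_8 {α : Type*} [DecidableEq α] (f : Finset α → ℝ)
    (hnn : ∀ S : Finset α, 0 ≤ f S)
    (hmono : ∀ X Y : Finset α, X ⊆ Y → f X ≤ f Y)
    (hnorm : f ∅ = 0)
    (hsub : ∀ X Y : Finset α, X ⊆ Y → ∀ e, e ∉ Y →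
      f (insert e Y) - f Y ≤ f (insert e X) - f X)
    (β : ℝ) (hβ : 1 ≤ β) (k : ℕ) (hk : 1 ≤ k)
    (O B S : Finset α) (hO : O.card ≤ k)
    (hmarg : ∀ e ∈ O \ B, f (insert e B) - f B ≤ β / k * f B)
    (hSB : S ⊆ B)
    (hgap : f B ≥ (1 + β / k) ^ k * f (B \ S)) :
    f S ≥ ((1 + β / k) ^ k - 1) / ((1 + β / k) ^ k * (1 + β)) * f O := by
  have hk0 : (0:ℝ) < k := by exact_mod_cast Nat.lt_of_lt_of_le Nat.zero_lt_one hk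
  have hβk : (0:ℝ) ≤ β / k := div_nonneg (by linarith) hk0.le
  set c : ℝ := (1 + β / k) ^ k with hc
  have hc1 : (1:ℝ) ≤ c := one_le_pow₀ (by linarith)
  have hc0 : (0:ℝ) < c := by linarith
  -- Lemma 4.1 : f O ≤ (1 + β) * f B
  have hOB : f O ≤ (1 + β) * f B := by
    have h1 : f O ≤ f (B ∪ (O \ B)) := by
      apply hmono
      intro x hx
      simp only [Finset.mem_union, Finset.mem_sdiff]
      by_cases hxB : x ∈ B
      · exact Or.inl hxB
      · exact Or.inr ⟨hx, hxB⟩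
    have h2 := aux_sum8 f hsub B (O \ B)
    have h3 : ∑ e ∈ O \ B, (f (insert e B) - f B) ≤ (O \ B).card * (β / k * f B) := by
      calc ∑ e ∈ O \ B, (f (insert e B) - f B)
          ≤ ∑ _e ∈ O \ B, (β / k * f B) := Finset.sum_le_sum hmarg
        _ = (O \ B).card * (β / k * f B) := by
            rw [Finset.sum_const, nsmul_eq_mul]
    have h4 : ((O \ B).card : ℝ) ≤ (k : ℝ) := by
      exact_mod_cast le_trans (Finset.card_le_card (Finset.sdiff_subset)) hO
    have h5 : (O \ B).card * (β / k * f B) ≤ k * (β / k * f B) := by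
      apply mul_le_mul_of_nonneg_right h4
      exact mul_nonneg hβk (hnn B)
    have h6 : (k : ℝ) * (β / k * f B) = β * f B := by
      field_simp
    nlinarith [hnn B]
  -- Lemma 4.2 : f B ≤ f S + f (B \ S)
  have hBS : f B ≤ f S + f (B \ S) := by
    have h1 : S ∪ (B \ S) = B := by
      ext x; simp only [Finset.mem_union, Finset.mem_sdiff]
      constructor
      · rintro (h | ⟨h, _⟩)
        · exact hSB h
        · exact h
      · intro h
        by_cases hxS : x ∈ S
        · exact Or.inl hxS
        · exact Or.inr ⟨h, hxS⟩
    have := aux_subadd8 f hmono hnorm hsub (B \ S) S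
    rwa [h1] at this
  -- combine
  have hfBS : f (B \ S) ≤ f B / c := by
    rw [le_div_iff₀ hc0]
    linarith [hgap]
  have hS : f S ≥ (c - 1) / c * f B := by
    have : (c - 1) / c * f B = f B - f B / c := by
      field_simp
    rw [this]
    linarith
  have hfB : f O / (1 + β) ≤ f B := by
    rw [div_le_iff₀ (by linarith : (0:ℝ) < 1 + β)]
    linarith
  have hcoef : (0:ℝ) ≤ (c - 1) / c := div_nonneg (by linarith) hc0.le
  calc ((1 + β / k) ^ k - 1) / ((1 + β / k) ^ k * (1 + β)) * f O
      = (c - 1) / c * (f O / (1 + β)) := by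
        rw [← hc]
        field_simp
    _ ≤ (c - 1) / c * f B := mul_le_mul_of_nonneg_left hfB hcoef
    _ ≤ f S := hS
end

section
/- Let f be a monotone, normalized, submodular function and let A, A' be finite sets with A' = (A \ {r}) ∪ {s} for some r ∈ A and s ∉ A \ {r}. Suppose f(s | A) ≥ (φ/k)·f(A) and f(r | A \ {r}) ≤ f(A)/k, where φ > 1 and k ≥ 1. Then f(A') − f(A) ≥ ((φ−1)/φ) · f(s | A) ≥ ((φ−1)/k) · f(A), and hence f(A') ≥ (1 + (φ−1)/k) · f(A). -/
/-- per-swap progress, Claim 5.5 ingredient. -/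
theorem stmt_9 {α : Type*} [DecidableEq α] (f : Finset α → ℝ)
    (hnn : ∀ S : Finset α, 0 ≤ f S)
    (hmono : ∀ X Y : Finset α, X ⊆ Y → f X ≤ f Y)
    (hnorm : f ∅ = 0)
    (hsub : ∀ X Y : Finset α, X ⊆ Y → ∀ e, e ∉ Y →
      f (insert e Y) - f Y ≤ f (insert e X) - f X)
    (φ k : ℝ) (hφ : 1 < φ) (hk : 1 ≤ k)
    (A A' : Finset α) (r s : α) (hr : r ∈ A) (hs : s ∉ A.erase r)
    (hA' : A' = insert s (A.erase r))
    (hsgain : f (insert s A) - f A ≥ φ / k * f A)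
    (hrloss : f (insert r (A.erase r)) - f (A.erase r) ≤ f A / k) :
    f A' - f A ≥ (φ - 1) / φ * (f (insert s A) - f A) ∧
      f A' - f A ≥ (φ - 1) / k * f A ∧
      f A' ≥ (1 + (φ - 1) / k) * f A := by
  have hφ0 : 0 < φ := by linarith
  have hk0 : 0 < k := by linarith
  have hfA0 : 0 ≤ f A := hnn A
  by_cases hsr : s = r
  · subst hsr
    have hAA : insert s A = A := Finset.insert_eq_self.2 hr
    have hA'A : A' = A := by rw [hA', Finset.insert_erase hr]
    have hfA : f A = 0 := by
      rw [hAA] at hsgain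
      nlinarith [div_pos hφ0 hk0]
    rw [hA'A, hAA, hfA]
    norm_num
  · have hsA : s ∉ A := fun h => hs (Finset.mem_erase.2 ⟨hsr, h⟩)
    have hsub1 : f (insert s A) - f A ≤ f (insert s (A.erase r)) - f (A.erase r) :=
      hsub _ _ (Finset.erase_subset r A) s hsA
    rw [Finset.insert_erase hr] at hrloss
    set g := f (insert s A) - f A with hg
    have h1 : f A / k ≤ g / φ := by
      rw [div_le_div_iff₀ hk0 hφ0]
      have h := hsgain
      rw [div_mul_eq_mul_div, ge_iff_le, div_le_iff₀ hk0] at h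
      linarith
    have hmain : f A' - f A ≥ (φ - 1) / φ * g := by
      rw [hA']
      have h2 : (φ - 1) / φ * g = g - g / φ := by field_simp
      linarith
    have hφ1 : (0:ℝ) ≤ φ - 1 := by linarith
    have h3 : (φ - 1) / φ * g ≥ (φ - 1) / k * f A := by
      have h4 := mul_le_mul_of_nonneg_left h1 hφ1
      have e1 : (φ - 1) / φ * g = (φ - 1) * (g / φ) := by ring
      have e2 : (φ - 1) / k * f A = (φ - 1) * (f A / k) := by ring
      linarith
    exact ⟨hmain, by linarith, by linarith⟩
end

section
/- Let f be a monotone, normalized submodular function, and let A_0, A_1, …, A_L be finite sets such that for each ℓ, A_ℓ = (A_{ℓ−1} \ {r_ℓ}) ∪ {s_ℓ} where f(s_ℓ | A_{ℓ−1}) ≥ (φ/k)·f(A_{ℓ−1}) and f(r_ℓ | A_{ℓ−1} \ {r_ℓ}) ≤ f(A_{ℓ−1})/k, for constants φ > 1 and k ≥ 1. Then f(A_L) ≥ (1 + (φ−1)/k)^L · f(A_0). -/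
/-- Claim 5.5: multiplicative growth over a sequence of swaps. -/
theorem stmt_10 {α : Type*} [DecidableEq α] (f : Finset α → ℝ)
    (hnn : ∀ S : Finset α, 0 ≤ f S)
    (hmono : ∀ X Y : Finset α, X ⊆ Y → f X ≤ f Y)
    (hnorm : f ∅ = 0)
    (hsub : ∀ X Y : Finset α, X ⊆ Y → ∀ e, e ∉ Y →
      f (insert e Y) - f Y ≤ f (insert e X) - f X)
    (φ k : ℝ) (hφ : 1 < φ) (hk : 1 ≤ k)
    (L : ℕ) (A : ℕ → Finset α) (r s : ℕ → α)
    (hswap : ∀ ℓ < L, A (ℓ + 1) = insert (s ℓ) ((A ℓ).erase (r ℓ)))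
    (hsgain : ∀ ℓ < L, f (insert (s ℓ) (A ℓ)) - f (A ℓ) ≥ φ / k * f (A ℓ))
    (hrloss : ∀ ℓ < L,
      f (insert (r ℓ) ((A ℓ).erase (r ℓ))) - f ((A ℓ).erase (r ℓ)) ≤ f (A ℓ) / k) :
    f (A L) ≥ (1 + (φ - 1) / k) ^ L * f (A 0) := by
  have hk0 : (0:ℝ) < k := lt_of_lt_of_le one_pos hk
  have hc : (0:ℝ) ≤ 1 + (φ - 1) / k := by
    have h1 : (0:ℝ) < φ - 1 := by linarith
    positivity
  induction L with
  | zero => simpa using le_refl (f (A 0))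
  | succ n ih =>
    have ih' : f (A n) ≥ (1 + (φ - 1) / k) ^ n * f (A 0) :=
      ih (fun ℓ h => hswap ℓ (Nat.lt_succ_of_lt h))
        (fun ℓ h => hsgain ℓ (Nat.lt_succ_of_lt h))
        (fun ℓ h => hrloss ℓ (Nat.lt_succ_of_lt h))
    have hA := hswap n (Nat.lt_succ_self n)
    have hg := hsgain n (Nat.lt_succ_self n)
    have step : f (A (n + 1)) ≥ (1 + (φ - 1) / k) * f (A n) := by
      by_cases hs : s n ∈ A n
      · have h0 : f (A n) = 0 := by
          rw [Finset.insert_eq_self.mpr hs] at hg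
          nlinarith [hnn (A n), div_pos (lt_trans one_pos hφ) hk0]
        rw [h0, mul_zero]
        exact hnn _
      · by_cases hr : r n ∈ A n
        · have hE : insert (r n) ((A n).erase (r n)) = A n := Finset.insert_erase hr
          have hrl := hrloss n (Nat.lt_succ_self n)
          rw [hE] at hrl
          have hsub' := hsub ((A n).erase (r n)) (A n) (Finset.erase_subset _ _) (s n) hs
          have key : (1 + (φ - 1) / k) * f (A n)
              = f (A n) + φ / k * f (A n) - f (A n) / k := by ring
          rw [hA]
          linarith
        · have hE : (A n).erase (r n) = A n := Finset.erase_eq_of_notMem hr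
          rw [hA, hE]
          have h1' : (φ - 1) / k ≤ φ / k := by gcongr; linarith
          nlinarith [mul_le_mul_of_nonneg_right h1' (hnn (A n))]
    calc (1 + (φ - 1) / k) ^ (n + 1) * f (A 0)
        = (1 + (φ - 1) / k) * ((1 + (φ - 1) / k) ^ n * f (A 0)) := by ring
      _ ≤ (1 + (φ - 1) / k) * f (A n) := by
          exact mul_le_mul_of_nonneg_left ih' hc
      _ ≤ f (A (n + 1)) := step
end

section
/- Let f be a monotone, normalized submodular function and let A_0, …, A_L be finite sets with A_{ℓ−1} ∪ {s_ℓ} = A_ℓ ∪ {r_ℓ} (with s_ℓ ∈ A_ℓ, r_ℓ ∈ A_{ℓ−1}) for all ℓ, such that f(s_ℓ | A_{ℓ−1}) ≥ φ · f(r_ℓ | A_{ℓ−1} \ {r_ℓ}) for some φ > 1. Then f(A_L) ≥ f(A_0) + (φ − 1) · Σ_{ℓ=1}^{L} f(r_ℓ | A_{ℓ−1} \ {r_ℓ}). -/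
/-- Claim 5.3: telescoping over swaps. -/
theorem stmt_11 {α : Type*} [DecidableEq α] (f : Finset α → ℝ)
    (hnn : ∀ S : Finset α, 0 ≤ f S)
    (hmono : ∀ X Y : Finset α, X ⊆ Y → f X ≤ f Y)
    (hnorm : f ∅ = 0)
    (hsub : ∀ X Y : Finset α, X ⊆ Y → ∀ e, e ∉ Y →
      f (insert e Y) - f Y ≤ f (insert e X) - f X)
    (φ : ℝ) (hφ : 1 < φ)
    (L : ℕ) (A : ℕ → Finset α) (r s : ℕ → α)
    (hrel : ∀ ℓ < L, insert (s ℓ) (A ℓ) = insert (r ℓ) (A (ℓ + 1)))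
    (hsmem : ∀ ℓ < L, s ℓ ∈ A (ℓ + 1))
    (hrmem : ∀ ℓ < L, r ℓ ∈ A ℓ)
    (hgain : ∀ ℓ < L,
      f (insert (s ℓ) (A ℓ)) - f (A ℓ) ≥
        φ * (f (insert (r ℓ) ((A ℓ).erase (r ℓ))) - f ((A ℓ).erase (r ℓ)))) :
    f (A L) ≥ f (A 0) + (φ - 1) *
      ∑ ℓ ∈ Finset.range L,
        (f (insert (r ℓ) ((A ℓ).erase (r ℓ))) - f ((A ℓ).erase (r ℓ))) := by
  induction L with
  | zero => simp
  | succ L ih =>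
    have ih' := ih (fun ℓ hℓ => hrel ℓ (hℓ.trans (Nat.lt_succ_self L)))
      (fun ℓ hℓ => hsmem ℓ (hℓ.trans (Nat.lt_succ_self L)))
      (fun ℓ hℓ => hrmem ℓ (hℓ.trans (Nat.lt_succ_self L)))
      (fun ℓ hℓ => hgain ℓ (hℓ.trans (Nat.lt_succ_self L)))
    have hL : L < L + 1 := Nat.lt_succ_self L
    set g := f (insert (r L) ((A L).erase (r L))) - f ((A L).erase (r L)) with hg
    -- erase (A L) (r L) ⊆ A (L+1)
    have hsubset : (A L).erase (r L) ⊆ A (L + 1) := by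
      intro x hx
      have hx1 := Finset.mem_erase.mp hx
      have : x ∈ insert (s L) (A L) := Finset.mem_insert_of_mem hx1.2
      rw [hrel L hL] at this
      rcases Finset.mem_insert.mp this with h | h
      · exact absurd h hx1.1
      · exact h
    -- insert r (erase r A) = A
    have hins : insert (r L) ((A L).erase (r L)) = A L :=
      Finset.insert_erase (hrmem L hL)
    -- f(r | A(L+1)) ≤ g
    have hkey : f (insert (r L) (A (L + 1))) - f (A (L + 1)) ≤ g := by
      by_cases hr : r L ∈ A (L + 1)
      · rw [Finset.insert_eq_self.mpr hr]
        have : f ((A L).erase (r L)) ≤ f (insert (r L) ((A L).erase (r L))) :=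
          hmono _ _ (Finset.subset_insert _ _)
        simp only [hg]; linarith
      · exact hsub _ _ hsubset (r L) hr
    have hstep : f (A (L + 1)) ≥ f (A L) + (φ - 1) * g := by
      have h1 := hgain L hL
      have h2 : f (insert (s L) (A L)) = f (insert (r L) (A (L + 1))) := by
        rw [hrel L hL]
      nlinarith [hkey, h1]
    rw [Finset.sum_range_succ]
    have hsum := ih'
    -- g ≥ 0
    have hgnn : 0 ≤ g := by
      have := hmono ((A L).erase (r L)) (insert (r L) ((A L).erase (r L)))
        (Finset.subset_insert _ _)
      linarith
    nlinarith [hstep, hsum]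
end

section
/- Consider the ground set G = {g_1, …, g_n} with n = 2k, and the weighted coverage function f on families of subsets of G given by f(S) = |⋃_{s ∈ S} s|. Let S be a family of ℓ ≤ k singletons {g_{i_1}}, …, {g_{i_ℓ}}, and let T be a set of size k containing g_{i_1}, …, g_{i_ℓ}. Then: (a) the maximum of f over families of at most k sets drawn from all singletons together with T is at least 2k − 1; and (b) for any family S' of at most k sets containing S ∪ {T} minus at most C−1 sets of S plus at most C new sets (each a singleton or T), f(S') ≤ k + C. -/
/-- combinatorial core of the lower bound (Theorem 3.1). -/
theorem stmt_14 (k C : ℕ) (hk : 1 ≤ k) (hC : 1 ≤ C)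
    (S : Finset (Finset (Fin (2 * k)))) (ℓ : ℕ) (hℓ : ℓ ≤ k)
    (hScard : S.card = ℓ) (hSsing : ∀ s ∈ S, s.card = 1)
    (T : Finset (Fin (2 * k))) (hT : T.card = k)
    (hST : ∀ s ∈ S, s ⊆ T) :
    (∃ S' : Finset (Finset (Fin (2 * k))),
        (∀ s ∈ S', s.card = 1 ∨ s = T) ∧ S'.card ≤ k ∧
          2 * k - 1 ≤ (S'.sup id).card) ∧
      (∀ S' : Finset (Finset (Fin (2 * k))),
        S'.card ≤ k → (∀ s ∈ S', s.card = 1 ∨ s = T) →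
        (S \ S').card ≤ C - 1 → (S' \ insert T S).card ≤ C →
        (S'.sup id).card ≤ k + C) := by
  constructor
  · have hkcard : (Tᶜ : Finset (Fin (2 * k))).card = k := by
      rw [Finset.card_compl, hT, Fintype.card_fin]; omega
    have hne : (Tᶜ : Finset (Fin (2 * k))).Nonempty := by
      rw [← Finset.card_pos, hkcard]; omega
    obtain ⟨u, hu⟩ := hne
    refine ⟨insert T ((Tᶜ.erase u).image fun g => {g}), ?_, ?_, ?_⟩
    · intro s hs
      rcases Finset.mem_insert.mp hs with h | h
      · right; exact h
      · obtain ⟨g, _, rfl⟩ := Finset.mem_image.mp h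
        left; simp
    · calc (insert T ((Tᶜ.erase u).image fun g => ({g} : Finset (Fin (2 * k))))).card
          ≤ ((Tᶜ.erase u).image fun g => ({g} : Finset (Fin (2 * k)))).card + 1 :=
            Finset.card_insert_le _ _
        _ ≤ (Tᶜ.erase u).card + 1 := by gcongr; exact Finset.card_image_le
        _ ≤ k := by rw [Finset.card_erase_of_mem hu, hkcard]; omega
    · have hmem : ∀ x : Fin (2 * k), x ≠ u →
          x ∈ (insert T ((Tᶜ.erase u).image fun g => ({g} : Finset (Fin (2 * k))))).sup id := by
        intro x hx
        by_cases hxT : x ∈ T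
        · exact Finset.mem_sup.mpr ⟨T, Finset.mem_insert_self _ _, hxT⟩
        · refine Finset.mem_sup.mpr ⟨{x}, ?_, Finset.mem_singleton_self x⟩
          exact Finset.mem_insert_of_mem (Finset.mem_image.mpr
            ⟨x, Finset.mem_erase.mpr ⟨hx, Finset.mem_compl.mpr hxT⟩, rfl⟩)
      have hsub : Finset.univ.erase u ⊆
          (insert T ((Tᶜ.erase u).image fun g => ({g} : Finset (Fin (2 * k))))).sup id :=
        fun x hx => hmem x (Finset.ne_of_mem_erase hx)
      calc 2 * k - 1 = (Finset.univ.erase u).card := by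
            rw [Finset.card_erase_of_mem (Finset.mem_univ u), Finset.card_univ,
              Fintype.card_fin]
        _ ≤ _ := Finset.card_le_card hsub
  · intro S' hcard hshape _ hnew
    have hsub : S'.sup id ⊆ T ∪ (S' \ insert T S).sup id := by
      intro x hx
      obtain ⟨s, hs, hxs⟩ := Finset.mem_sup.mp hx
      by_cases h : s ∈ insert T S
      · apply Finset.mem_union_left
        rcases Finset.mem_insert.mp h with rfl | h
        · exact hxs
        · exact hST s h hxs
      · exact Finset.mem_union_right _ (Finset.mem_sup.mpr
          ⟨s, Finset.mem_sdiff.mpr ⟨hs, h⟩, hxs⟩)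
    have hnewcard : ((S' \ insert T S).sup id).card ≤ C := by
      calc ((S' \ insert T S).sup id).card
          ≤ ∑ s ∈ S' \ insert T S, (id s).card := by
            rw [Finset.sup_eq_biUnion]; exact Finset.card_biUnion_le
        _ ≤ ∑ _s ∈ S' \ insert T S, 1 := by
            apply Finset.sum_le_sum
            intro s hs
            rcases hshape s (Finset.mem_sdiff.mp hs).1 with h | rfl
            · simp [h]
            · exact absurd (Finset.mem_insert_self _ _) (Finset.mem_sdiff.mp hs).2
        _ ≤ C := by simpa using hnew
    calc (S'.sup id).card ≤ (T ∪ (S' \ insert T S).sup id).card := Finset.card_le_card hsub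
      _ ≤ T.card + ((S' \ insert T S).sup id).card := Finset.card_union_le _ _
      _ ≤ k + C := by rw [hT]; omega
end

section
/- In the weighted covering instance of the Swapping tightness example with parameters i ≥ 1, k = 2^i, and δ > 0: let f(S) = Σ_{(a,b) covered by S} w_{(a,b)} with element weights w_ℓ^j = 2^j for j < i and w_ℓ^i = 2^i − δ. The solution S consisting of the k singletons {e_1^{i−1}}, …, {e_k^{i−1}} has f(S) = k·2^{i−1}, while the solution S* consisting of the bundles E^0, …, E^{i−1} together with k − i singletons from E^i has f(S*) ≥ k·(2^{i+1} − 1) − kδ − i·2^i; consequently f(S*)/f(S) ≥ 4 − (2/2^i)(δ + 1 + i). -/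
lemma geom_aux (n : ℕ) : ∑ j ∈ Finset.range n, (2:ℝ)^j = 2^n - 1 := by
  induction n with
  | zero => simp
  | succ n ih => rw [Finset.sum_range_succ, ih]; ring

lemma ite_sum_aux (n m : ℕ) (x : ℝ) (h : m ≤ n) :
    ∑ ℓ ∈ Finset.range n, (if ℓ < m then x else 0) = m * x := by
  rw [← Finset.sum_filter]
  have : (Finset.range n).filter (· < m) = Finset.range m := by
    ext a; simp [Finset.mem_range]; omega
  rw [this, Finset.sum_const, Finset.card_range, nsmul_eq_mul]

/-- tightness of the Swapping analysis (Example B.1). -/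
theorem stmt_16 (i : ℕ) (hi : 1 ≤ i) (δ : ℝ) (hδ : 0 < δ)
    (k : ℕ) (hk : k = 2 ^ i)
    (w : Fin (i + 1) × Fin k → ℝ)
    (hw : ∀ p, w p = if (p.1 : ℕ) = i then 2 ^ i - δ else 2 ^ (p.1 : ℕ))
    (f : Finset (Finset (Fin (i + 1) × Fin k)) → ℝ)
    (hf : ∀ S, f S = ∑ p ∈ S.sup id, w p)
    (S : Finset (Finset (Fin (i + 1) × Fin k)))
    (hS : S = Finset.image
      (fun ℓ : Fin k => ({(⟨i - 1, by omega⟩, ℓ)} : Finset (Fin (i + 1) × Fin k)))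
      Finset.univ)
    (Sstar : Finset (Finset (Fin (i + 1) × Fin k)))
    (hSstar : Sstar =
      (Finset.image
        (fun j : Fin (i + 1) =>
          Finset.image (fun ℓ : Fin k => ((j, ℓ) : Fin (i + 1) × Fin k)) Finset.univ)
        (Finset.univ.filter (fun j : Fin (i + 1) => (j : ℕ) < i))) ∪
      (Finset.image
        (fun ℓ : Fin k => ({(⟨i, by omega⟩, ℓ)} : Finset (Fin (i + 1) × Fin k)))
        (Finset.univ.filter (fun ℓ : Fin k => (ℓ : ℕ) < k - i)))) :
    f S = k * 2 ^ (i - 1) ∧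
      (k : ℝ) * (2 ^ (i + 1) - 1) - k * δ - i * 2 ^ i ≤ f Sstar ∧
      4 - 2 / 2 ^ i * (δ + 1 + i) ≤ f Sstar / f S := by
  have hik : i ≤ k := by rw [hk]; exact Nat.le_of_lt (Nat.lt_two_pow_self (n := i))
  have hkpos : 0 < k := by omega
  -- the value of f S
  have hsupS : S.sup id
      = Finset.image (fun ℓ : Fin k => ((⟨i - 1, by omega⟩, ℓ) : Fin (i+1) × Fin k))
          Finset.univ := by
    rw [hS]; ext p
    simp [Finset.mem_sup, eq_comm]
  have hfS : f S = (k : ℝ) * 2 ^ (i - 1) := by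
    rw [hf, hsupS, Finset.sum_image (by intro a _ b _ h; simpa using h)]
    have : ∀ ℓ : Fin k, w (⟨i - 1, by omega⟩, ℓ) = 2 ^ (i - 1) := by
      intro ℓ; rw [hw, if_neg (by simp; omega)]
    simp only [this]
    rw [Finset.sum_const, Finset.card_univ, Fintype.card_fin, nsmul_eq_mul]
  -- the value of f Sstar
  have hsupT : Sstar.sup id
      = Finset.univ.filter (fun p : Fin (i+1) × Fin k => (p.1 : ℕ) < i)
        ∪ Finset.univ.filter
            (fun p : Fin (i+1) × Fin k => (p.1 : ℕ) = i ∧ (p.2 : ℕ) < k - i) := by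
    rw [hSstar]; ext ⟨a, b⟩
    simp only [Finset.mem_sup, Finset.mem_union, Finset.mem_image, Finset.mem_filter,
      Finset.mem_univ, true_and, id, Finset.mem_singleton, Prod.mk.injEq]
    constructor
    · rintro ⟨s, ⟨j, hj, rfl⟩ | ⟨ℓ, hℓ, rfl⟩, hs⟩
      · simp only [Finset.mem_image, Finset.mem_univ, true_and, Prod.mk.injEq] at hs
        obtain ⟨ℓ, h1, h2⟩ := hs
        exact Or.inl (h1 ▸ hj)
      · simp only [Finset.mem_singleton, Prod.mk.injEq] at hs
        obtain ⟨h1, h2⟩ := hs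
        right
        constructor
        · simp [h1]
        · rw [← h2] at hℓ; exact hℓ
    · rintro (h | ⟨h1, h2⟩)
      · exact ⟨_, Or.inl ⟨a, h, rfl⟩, by simp⟩
      · refine ⟨_, Or.inr ⟨b, h2, rfl⟩, ?_⟩
        simp only [Finset.mem_singleton, Prod.mk.injEq]
        exact ⟨Fin.ext h1, trivial⟩
  have hdisj : Disjoint
      (Finset.univ.filter (fun p : Fin (i+1) × Fin k => (p.1 : ℕ) < i))
      (Finset.univ.filter
        (fun p : Fin (i+1) × Fin k => (p.1 : ℕ) = i ∧ (p.2 : ℕ) < k - i)) := by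
    rw [Finset.disjoint_left]
    intro p hp hq
    simp only [Finset.mem_filter, Finset.mem_univ, true_and] at hp hq
    omega
  have hsum1 : ∑ p ∈ Finset.univ.filter (fun p : Fin (i+1) × Fin k => (p.1 : ℕ) < i), w p
      = (k : ℝ) * (2 ^ i - 1) := by
    rw [Finset.sum_filter, Fintype.sum_prod_type]
    have hterm : ∀ (j : Fin (i+1)) (ℓ : Fin k),
        (if (j : ℕ) < i then w (j, ℓ) else 0)
          = if (j : ℕ) < i then (2:ℝ) ^ (j : ℕ) else 0 := by
      intro j ℓ
      by_cases h : (j : ℕ) < i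
      · rw [if_pos h, if_pos h, hw]; simp only
        rw [if_neg (by omega)]
      · rw [if_neg h, if_neg h]
    simp only [hterm]
    have hinner : ∀ j : Fin (i+1),
        ∑ _ℓ : Fin k, (if (j : ℕ) < i then (2:ℝ) ^ (j : ℕ) else 0)
          = (k : ℝ) * (if (j : ℕ) < i then (2:ℝ) ^ (j : ℕ) else 0) := by
      intro j
      rw [Finset.sum_const, Finset.card_univ, Fintype.card_fin, nsmul_eq_mul]
    simp only [hinner]
    rw [← Finset.mul_sum]
    congr 1
    rw [Fin.sum_univ_eq_sum_range (fun j => if j < i then (2:ℝ) ^ j else 0)]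
    rw [← Finset.sum_filter]
    have : (Finset.range (i+1)).filter (· < i) = Finset.range i := by
      ext a; simp [Finset.mem_range]; omega
    rw [this, geom_aux]
  have hsum2 : ∑ p ∈ Finset.univ.filter
        (fun p : Fin (i+1) × Fin k => (p.1 : ℕ) = i ∧ (p.2 : ℕ) < k - i), w p
      = ((k : ℝ) - i) * (2 ^ i - δ) := by
    rw [Finset.sum_filter, Fintype.sum_prod_type]
    have hterm : ∀ (j : Fin (i+1)) (ℓ : Fin k),
        (if (j : ℕ) = i ∧ (ℓ : ℕ) < k - i then w (j, ℓ) else 0)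
          = if (j : ℕ) = i then (if (ℓ : ℕ) < k - i then (2:ℝ) ^ i - δ else 0) else 0 := by
      intro j ℓ
      by_cases h : (j : ℕ) = i
      · by_cases h2 : (ℓ : ℕ) < k - i
        · rw [if_pos ⟨h, h2⟩, if_pos h, if_pos h2, hw]; simp only
          rw [if_pos h]
        · rw [if_neg (by tauto), if_pos h, if_neg h2]
      · rw [if_neg (by tauto), if_neg h]
    simp only [hterm]
    have hinner : ∀ j : Fin (i+1),
        ∑ ℓ : Fin k, (if (j : ℕ) = i then (if (ℓ : ℕ) < k - i then (2:ℝ) ^ i - δ else 0) else 0)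
          = if (j : ℕ) = i then (((k : ℝ) - i) * (2 ^ i - δ)) else 0 := by
      intro j
      by_cases h : (j : ℕ) = i
      · simp only [if_pos h]
        rw [Fin.sum_univ_eq_sum_range (fun ℓ => if ℓ < k - i then (2:ℝ) ^ i - δ else 0)]
        rw [ite_sum_aux _ _ _ (by omega)]
        congr 1
        push_cast [Nat.cast_sub hik]
        ring
      · simp only [if_neg h, Finset.sum_const_zero]
    simp only [hinner]
    rw [Fin.sum_univ_eq_sum_range (fun j => if j = i then ((k : ℝ) - i) * (2 ^ i - δ) else 0)]
    rw [Finset.sum_ite_eq' (Finset.range (i+1)) i (fun _ => ((k : ℝ) - i) * (2 ^ i - δ))]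
    rw [if_pos (by simp)]
  have hfT : f Sstar = (k : ℝ) * (2 ^ i - 1) + ((k : ℝ) - i) * (2 ^ i - δ) := by
    rw [hf, hsupT, Finset.sum_union hdisj, hsum1, hsum2]
  -- numeric facts
  have hK : (k : ℝ) = 2 ^ i := by rw [hk]; push_cast; ring
  have hI : (0:ℝ) ≤ (i : ℝ) := Nat.cast_nonneg i
  have h2' : (2:ℝ) ^ (i + 1) = 2 * 2 ^ i := by rw [pow_succ]; ring
  have hA : (2:ℝ) ^ (i - 1) = 2 ^ i / 2 := by
    rw [eq_div_iff (two_ne_zero), ← pow_succ]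
    congr 1; omega
  have goal2 : (k : ℝ) * (2 ^ (i + 1) - 1) - k * δ - i * 2 ^ i ≤ f Sstar := by
    rw [hfT, hK, h2']
    nlinarith [mul_nonneg hI hδ.le]
  refine ⟨hfS, goal2, ?_⟩
  have hPpos : (0:ℝ) < 2 ^ i := by positivity
  have hfSpos : 0 < f S := by rw [hfS]; positivity
  rw [le_div_iff₀ hfSpos]
  refine le_trans (le_of_eq ?_) goal2
  rw [hfS, hK, hA, h2']
  field_simp
  ring
end
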